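/- arXiv:1508.05623 — 2 statements merged into one kernel-verified Lean document; each statement's English description precedes it below -/
import Mathlib

section
/- For all integers k ≥ 4 and t with 2 ≤ t ≤ k-1, f(t) < 1/2, where f(t) = C(t, ⌊t/2⌋) · ⌈t/2⌉^⌈t/2⌉ · (⌊t/2⌋+1)^⌊t/2⌋ / (t+1)^t. -/
open Finset in
lemma aux1_stmt7 (m : ℕ) (hm : 1 ≤ m) : 2 * (2*m+1).choose m < 2^(2*m+1) := by
  have hsum := Nat.sum_range_choose (2*m+1)
  have hsub : ({m, m+1} : Finset ℕ) ⊆ range (2*m+2) := by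
    intro x hx
    simp only [mem_insert, mem_singleton] at hx
    rcases hx with rfl | rfl <;> simp <;> omega
  have hlt : ∑ i ∈ ({m, m+1} : Finset ℕ), (2*m+1).choose i
      < ∑ i ∈ range (2*m+2), (2*m+1).choose i := by
    apply Finset.sum_lt_sum_of_subset hsub (i := 0)
    · simp
    · simp only [mem_insert, mem_singleton]; omega
    · simp
    · intros; exact Nat.zero_le _
  rw [Finset.sum_pair (by omega : m ≠ m+1)] at hlt
  have hsymm : (2*m+1).choose (m+1) = (2*m+1).choose m := by
    rw [← Nat.choose_symm (by omega : m+1 ≤ 2*m+1)]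
    congr 1
    omega
  rw [hsymm, hsum] at hlt
  omega

lemma aux2_stmt7 (m : ℕ) (hm : 1 ≤ m) : 2 * (2*m).choose m ≤ 2^(2*m) := by
  obtain ⟨n, rfl⟩ : ∃ n, m = n + 1 := ⟨m - 1, by omega⟩
  have h1 : (2*(n+1)).choose (n+1) = (2*n+1).choose n + (2*n+1).choose (n+1) := by
    have h : 2*(n+1) = (2*n+1)+1 := by ring
    rw [h, Nat.choose_succ_succ]
  have hsymm : (2*n+1).choose (n+1) = (2*n+1).choose n := by
    rw [← Nat.choose_symm (by omega : n+1 ≤ 2*n+1)]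
    congr 1
    omega
  have hmid : (2*n+1).choose n ≤ 4^n := Nat.choose_middle_le_pow n
  have h4 : (2:ℕ)^(2*(n+1)) = 4 * 4^n := by
    rw [pow_mul]
    norm_num [pow_succ, mul_comm]
  rw [h1, hsymm, h4]
  omega

theorem stmt_7 (k t : ℕ) (hk : 4 ≤ k) (ht : 2 ≤ t) (htk : t ≤ k - 1) :
    (Nat.choose t (t / 2) : ℝ) * ((t + 1) / 2 : ℕ) ^ ((t + 1) / 2) *
        (t / 2 + 1 : ℕ) ^ (t / 2) / ((t : ℝ) + 1) ^ t < 1 / 2 := by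
  rcases Nat.even_or_odd t with ⟨m, rfl⟩ | ⟨m, rfl⟩
  · -- even case: t = m + m
    have hm : 1 ≤ m := by omega
    have e1 : (m + m + 1) / 2 = m := by omega
    have e2 : (m + m) / 2 = m := by omega
    rw [e1, e2, div_lt_div_iff₀ (by positivity) (by norm_num), one_mul]
    have key : (m+m).choose m * m^m * (m+1)^m * 2 < (m+m+1)^(m+m) := by
      calc (m+m).choose m * m^m * (m+1)^m * 2
          = 2 * (2*m).choose m * (m*(m+1))^m := by rw [two_mul m, mul_pow]; ring
        _ ≤ 2^(2*m) * (m*(m+1))^m :=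
            Nat.mul_le_mul_right _ (aux2_stmt7 m hm)
        _ = (4*(m*(m+1)))^m := by rw [mul_pow, pow_mul]; norm_num [mul_pow]
        _ < ((m+m+1)^2)^m := Nat.pow_lt_pow_left (by nlinarith) (by omega)
        _ = (m+m+1)^(m+m) := by rw [← pow_mul]; ring_nf
    exact_mod_cast key
  · -- odd case: t = 2*m + 1
    have hm : 1 ≤ m := by omega
    have e1 : (2*m+1+1) / 2 = m+1 := by omega
    have e2 : (2*m+1) / 2 = m := by omega
    rw [e1, e2, div_lt_div_iff₀ (by positivity) (by norm_num), one_mul]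
    have key : (2*m+1).choose m * (m+1)^(m+1) * (m+1)^m * 2 < (2*m+1+1)^(2*m+1) := by
      calc (2*m+1).choose m * (m+1)^(m+1) * (m+1)^m * 2
          = 2 * (2*m+1).choose m * (m+1)^(2*m+1) := by ring
        _ < 2^(2*m+1) * (m+1)^(2*m+1) :=
            mul_lt_mul_of_pos_right (aux1_stmt7 m hm) (by positivity)
        _ = (2*m+1+1)^(2*m+1) := by rw [← mul_pow]; ring_nf
    exact_mod_cast key
end

section
/- For all integers k ≥ 4 and t with 2 ≤ t ≤ k-1, f(t) < (1 - 1/k)^t, where f(t) = C(t, ⌊t/2⌋) · ⌈t/2⌉^⌈t/2⌉ · (⌊t/2⌋+1)^⌊t/2⌋ / (t+1)^t. -/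
/-!
Write `N(t)` for the numerator of `f(t)`. For `t ≥ 3` we have `N(t) < t ^ t`, hence
`f(t) < (1 - 1 / (t + 1)) ^ t ≤ (1 - 1 / k) ^ t`; the bound on `N(t)` combines
`3 · C(2m, m) ≤ 4 ^ m` for `m ≥ 3` with `(n + 1) ^ n ≤ e · n ^ n < 3 · n ^ n`.
For `t = 2`, `f(2) = 4 / 9 < (3 / 4) ^ 2`.
-/

namespace Nat

theorem centralBinom_succ_le_four_mul (n : ℕ) : centralBinom (n + 1) ≤ 4 * centralBinom n := by
  refine Nat.le_of_mul_le_mul_left ?_ n.succ_pos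
  calc (n + 1) * centralBinom (n + 1) = 2 * (2 * n + 1) * centralBinom n :=
        succ_mul_centralBinom_succ n
    _ ≤ (n + 1) * (4 * centralBinom n) := by nlinarith

theorem three_mul_centralBinom_le_four_pow {n : ℕ} (hn : 3 ≤ n) :
    3 * centralBinom n ≤ 4 ^ n := by
  induction n, hn using Nat.le_induction with
  | base => decide
  | succ n _ ih =>
    calc 3 * centralBinom (n + 1) ≤ 4 * (3 * centralBinom n) := by
          have := centralBinom_succ_le_four_mul n; omega
      _ ≤ 4 ^ (n + 1) := by rw [pow_succ']; gcongr

theorem centralBinom_succ_eq_two_mul_choose (n : ℕ) :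
    centralBinom (n + 1) = 2 * (2 * n + 1).choose n := by
  rw [centralBinom, show 2 * (n + 1) = 2 * n + 1 + 1 by ring, choose_succ_succ,
    choose_symm_half]
  ring

theorem succ_pow_lt_three_mul_pow {n : ℕ} (hn : n ≠ 0) : (n + 1) ^ n < 3 * n ^ n := by
  have hn' : (0 : ℝ) < n := by positivity
  have key : ((n : ℝ) + 1) ^ n < 3 * (n : ℝ) ^ n :=
    calc ((n : ℝ) + 1) ^ n = (1 + (n : ℝ)⁻¹) ^ n * (n : ℝ) ^ n := by
          rw [← mul_pow]; congr 1; field_simp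
      _ ≤ Real.exp 1 * (n : ℝ) ^ n := by gcongr; exact Real.one_add_inv_pow_le_exp
      _ < 3 * (n : ℝ) ^ n := by
          gcongr; exact Real.exp_one_lt_d9.trans (by norm_num)
  exact_mod_cast key

theorem centralBinom_mul_pow_mul_succ_pow_lt {m : ℕ} (hm : 2 ≤ m) :
    centralBinom m * m ^ m * (m + 1) ^ m < (2 * m) ^ (2 * m) := by
  obtain rfl | hm := hm.eq_or_lt
  · decide
  have hC := three_mul_centralBinom_le_four_pow hm
  have hpos : 0 < centralBinom m * m ^ m := by positivity [centralBinom_pos m]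
  calc centralBinom m * m ^ m * (m + 1) ^ m < centralBinom m * m ^ m * (3 * m ^ m) :=
        Nat.mul_lt_mul_of_pos_left (succ_pow_lt_three_mul_pow (by omega)) hpos
    _ = 3 * centralBinom m * (m ^ m * m ^ m) := by ring
    _ ≤ 4 ^ m * (m ^ m * m ^ m) := by gcongr
    _ = (2 * m) ^ (2 * m) := by rw [mul_pow, pow_mul, ← pow_add, ← two_mul, pow_mul]; norm_num

theorem choose_mul_succ_pow_lt {m : ℕ} (hm : 1 ≤ m) :
    (2 * m + 1).choose m * (m + 1) ^ (2 * m + 1) < (2 * m + 1) ^ (2 * m + 1) := by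
  obtain rfl | hm := hm.eq_or_lt
  · decide
  have hC := three_mul_centralBinom_le_four_pow (show 3 ≤ m + 1 by omega)
  have h4 : 4 ^ (m + 1) = 2 * 2 ^ (2 * m + 1) := by
    rw [show 2 * 2 ^ (2 * m + 1) = 2 ^ (2 * (m + 1)) by ring, pow_mul]; norm_num
  refine Nat.lt_of_mul_lt_mul_left (a := 4 ^ (m + 1)) ?_
  calc 4 ^ (m + 1) * ((2 * m + 1).choose m * (m + 1) ^ (2 * m + 1))
        = centralBinom (m + 1) * (2 * m + 1 + 1) ^ (2 * m + 1) := by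
          rw [h4, centralBinom_succ_eq_two_mul_choose, show 2 * m + 1 + 1 = 2 * (m + 1) by ring,
            mul_pow]
          ring
    _ < centralBinom (m + 1) * (3 * (2 * m + 1) ^ (2 * m + 1)) :=
        Nat.mul_lt_mul_of_pos_left (succ_pow_lt_three_mul_pow (by omega)) (centralBinom_pos _)
    _ = 3 * centralBinom (m + 1) * (2 * m + 1) ^ (2 * m + 1) := by ring
    _ ≤ 4 ^ (m + 1) * (2 * m + 1) ^ (2 * m + 1) := by gcongr

theorem choose_half_mul_pow_mul_pow_lt_pow {t : ℕ} (ht : 3 ≤ t) :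
    t.choose (t / 2) * ((t + 1) / 2) ^ ((t + 1) / 2) * (t / 2 + 1) ^ (t / 2) < t ^ t := by
  obtain ⟨m, rfl | rfl⟩ := t.even_or_odd'
  · rw [show 2 * m / 2 = m by omega, show (2 * m + 1) / 2 = m by omega]
    exact centralBinom_mul_pow_mul_succ_pow_lt (by omega)
  · rw [show (2 * m + 1) / 2 = m by omega, show (2 * m + 1 + 1) / 2 = m + 1 by omega, mul_assoc,
      ← pow_add, show m + 1 + m = 2 * m + 1 by ring]
    exact choose_mul_succ_pow_lt (by omega)

end Nat

theorem stmt_8 (k t : ℕ) (hk : 4 ≤ k) (ht : 2 ≤ t) (htk : t ≤ k - 1) :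
    (Nat.choose t (t / 2) : ℝ) * ((t + 1) / 2 : ℕ) ^ ((t + 1) / 2) *
        (t / 2 + 1 : ℕ) ^ (t / 2) / ((t : ℝ) + 1) ^ t
      < (1 - 1 / (k : ℝ)) ^ t := by
  obtain rfl | ht3 := ht.eq_or_lt
  · have hk' : (k : ℝ)⁻¹ ≤ 4⁻¹ := by gcongr; exact_mod_cast hk
    norm_num [Nat.choose]
    nlinarith
  · have hkt : (t : ℝ) + 1 ≤ k := by exact_mod_cast (by omega : t + 1 ≤ k)
    calc _ < (t : ℝ) ^ t / ((t : ℝ) + 1) ^ t := by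
          gcongr; exact_mod_cast Nat.choose_half_mul_pow_mul_pow_lt_pow ht3
      _ = (1 - 1 / ((t : ℝ) + 1)) ^ t := by rw [← div_pow]; congr 1; field_simp; ring
      _ ≤ (1 - 1 / (k : ℝ)) ^ t := by
          have hinv_le_one : 1 / ((t : ℝ) + 1) ≤ 1 := by rw [div_le_one (by positivity)]; linarith
          gcongr
end
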